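/- For n ≥ 2, set λ_n^B = (m(n)/m(n−1))·(m(n−1)/m(n−2) + 2). If y(x) = ∑_{p≥0} (a_p/m(p)) x^p is a formal solution of x² ∂_m² y + 2(x+1) ∂_m y − λ_n^B y = 0, then a_1 = (λ_n^B/2) a_0, a_2 = (λ_n^B/4)(λ_n^B − 2m(1)) a_0, and for p ≥ 2, a_{p+1}/m(p+1) = [ (λ_n^B − (m(p)/m(p−1))(m(p−1)/m(p−2) + 2)) / (2 m(p+1)/m(p)) ] · a_p/m(p); in particular a_j = 0 for all j ≥ n+1 and y is a polynomial of degree at most n. -/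

import Mathlib

/-!
Comparing coefficients of `x^p` turns the equation into the two-term recurrence
`λ_p c_p + 2 (m(p+1)/m(p)) c_{p+1} = λ c_p` for the coefficients `c_p = a_p / m(p)` of `y`,
where `λ_p = (m(p)/m(p-1)) (m(p-1)/m(p-2) + 2)` for `p ≥ 2`; the cases `p = 0, 1` give `a_1`
and `a_2`. Since `λ = λ_n`, the recurrence forces `c_{n+1} = 0`, and then every later
coefficient vanishes.
-/

open PowerSeries

/-- The moment derivative associated to a sequence `m`. -/
noncomputable def mderiv (m : ℕ → ℝ) (f : PowerSeries ℂ) : PowerSeries ℂ :=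
  PowerSeries.mk fun p => ((m (p + 1) / m p : ℝ) : ℂ) * PowerSeries.coeff (p + 1) f

noncomputable def besselEigenvalue (m : ℕ → ℝ) (p : ℕ) : ℝ :=
  (m p / m (p - 1)) * (m (p - 1) / m (p - 2) + 2)

noncomputable def besselOp (m : ℕ → ℝ) (f : PowerSeries ℂ) : PowerSeries ℂ :=
  (X : PowerSeries ℂ) ^ 2 * mderiv m (mderiv m f) + 2 * ((X : PowerSeries ℂ) + 1) * mderiv m f

section Coefficients

variable (m : ℕ → ℝ) (f : PowerSeries ℂ)

@[simp]
theorem coeff_mderiv (p : ℕ) :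
    coeff p (mderiv m f) = ((m (p + 1) / m p : ℝ) : ℂ) * coeff (p + 1) f :=
  coeff_mk _ _

theorem coeff_besselOp (p : ℕ) :
    coeff p (besselOp m f) = coeff p (X ^ 2 * mderiv m (mderiv m f))
      + 2 * coeff p (X * mderiv m f) + 2 * coeff p (mderiv m f) := by
  have hC : (2 : PowerSeries ℂ) = C 2 := (map_ofNat C 2).symm
  rw [besselOp, hC, mul_assoc, add_mul, one_mul, mul_add, map_add, map_add, coeff_C_mul,
    coeff_C_mul, add_assoc]

theorem coeff_zero_besselOp :
    coeff 0 (besselOp m f) = 2 * ((m 1 / m 0 : ℝ) : ℂ) * coeff 1 f := by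
  simp [coeff_besselOp, mul_assoc]

theorem coeff_one_besselOp :
    coeff 1 (besselOp m f) = 2 * ((m 1 / m 0 : ℝ) : ℂ) * coeff 1 f
      + 2 * ((m 2 / m 1 : ℝ) : ℂ) * coeff 2 f := by
  simp [coeff_besselOp, coeff_X_pow_mul', mul_assoc]

theorem coeff_add_two_besselOp (k : ℕ) :
    coeff (k + 2) (besselOp m f) = (besselEigenvalue m (k + 2) : ℂ) * coeff (k + 2) f
      + 2 * ((m (k + 3) / m (k + 2) : ℝ) : ℂ) * coeff (k + 3) f := by
  simp only [coeff_besselOp, coeff_X_pow_mul', le_add_iff_nonneg_left, zero_le, ↓reduceIte,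
    add_tsub_cancel_right, coeff_mderiv, coeff_succ_X_mul, besselEigenvalue, Nat.add_one_sub_one]
  push_cast
  ring

theorem coeff_besselOp_eq_of_sub_eq_zero {μ : ℂ} (h : besselOp m f - C μ * f = 0) (p : ℕ) :
    coeff p (besselOp m f) = μ * coeff p f := by
  rw [← coeff_C_mul, ← sub_eq_zero, ← map_sub, h, map_zero]

theorem coeff_succ_of_coeff_besselOp (hm : ∀ p, m p ≠ 0) {μ : ℝ} {p : ℕ} (hp : 2 ≤ p)
    (h : coeff p (besselOp m f) = μ * coeff p f) :
    coeff (p + 1) f =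
      (((μ - besselEigenvalue m p) / (2 * m (p + 1) / m p) : ℝ) : ℂ) * coeff p f := by
  obtain ⟨k, rfl⟩ : ∃ k, p = k + 2 := ⟨p - 2, by omega⟩
  rw [coeff_add_two_besselOp] at h
  have hk2 : (m (k + 2) : ℂ) ≠ 0 := by exact_mod_cast hm (k + 2)
  have hk3 : (m (k + 3) : ℂ) ≠ 0 := by exact_mod_cast hm (k + 3)
  push_cast at h ⊢
  field_simp at h ⊢
  linear_combination h

end Coefficients

theorem eq_zero_of_succ_eq_mul {R : Type*} [MulZeroClass R] {c g : ℕ → R} {n : ℕ}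
    (hrec : ∀ p, n ≤ p → c (p + 1) = g p * c p) (hg : g n = 0) :
    ∀ j, n + 1 ≤ j → c j = 0 := by
  intro j hj
  induction j, hj using Nat.le_induction with
  | base => rw [hrec n le_rfl, hg, zero_mul]
  | succ j hj ih => rw [hrec j (by omega), ih, mul_zero]

/-- Formal solutions of the generalized Bessel moment equation satisfy the stated recurrence
and are polynomials of degree at most `n`. -/
theorem stmt9 (m : ℕ → ℝ) (hm : ∀ p, 0 < m p) (hm0 : m 0 = 1)
    (n : ℕ) (hn : 2 ≤ n)
    (a : ℕ → ℂ) (y : PowerSeries ℂ)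
    (hy : y = PowerSeries.mk fun p => a p / (m p : ℂ))
    (heq : (X : PowerSeries ℂ) ^ 2 * mderiv m (mderiv m y)
      + 2 * ((X : PowerSeries ℂ) + 1) * mderiv m y
      - C (((m n / m (n - 1)) * (m (n - 1) / m (n - 2) + 2) : ℝ) : ℂ) * y = 0) :
    a 1 = (((m n / m (n - 1)) * (m (n - 1) / m (n - 2) + 2) / 2 : ℝ) : ℂ) * a 0 ∧
    a 2 = (((m n / m (n - 1)) * (m (n - 1) / m (n - 2) + 2) / 4 *
        ((m n / m (n - 1)) * (m (n - 1) / m (n - 2) + 2) - 2 * m 1) : ℝ) : ℂ) * a 0 ∧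
    (∀ p, 2 ≤ p →
      a (p + 1) / (m (p + 1) : ℂ) =
        ((((m n / m (n - 1)) * (m (n - 1) / m (n - 2) + 2)
            - (m p / m (p - 1)) * (m (p - 1) / m (p - 2) + 2)) /
          (2 * m (p + 1) / m p) : ℝ) : ℂ) * (a p / (m p : ℂ))) ∧
    (∀ j, n + 1 ≤ j → a j = 0) := by
  set μ : ℝ := besselEigenvalue m n
  have hmC : ∀ p, (m p : ℂ) ≠ 0 := fun p => by exact_mod_cast (hm p).ne'
  have hc : ∀ p, coeff p y = a p / m p := fun p => by rw [hy, coeff_mk]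
  have hcoeff : ∀ p, coeff p (besselOp m y) = μ * coeff p y :=
    coeff_besselOp_eq_of_sub_eq_zero m y heq
  have hrec : ∀ p, 2 ≤ p → a (p + 1) / m (p + 1) =
      (((μ - besselEigenvalue m p) / (2 * m (p + 1) / m p) : ℝ) : ℂ) * (a p / m p) := fun p hp => by
    simpa only [hc] using coeff_succ_of_coeff_besselOp m y (fun p => (hm p).ne') hp (hcoeff p)
  have h0 := hcoeff 0
  have h1 := hcoeff 1
  rw [coeff_zero_besselOp] at h0
  rw [coeff_one_besselOp] at h1
  simp only [hc, hm0] at h0 h1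
  have ha1 : a 1 = ((μ / 2 : ℝ) : ℂ) * a 0 := by
    push_cast at h0 ⊢
    field_simp [hmC 1] at h0
    linear_combination h0 / 2
  have ha2 : a 2 = ((μ / 4 * (μ - 2 * m 1) : ℝ) : ℂ) * a 0 := by
    rw [ha1] at h1
    push_cast at h1 ⊢
    field_simp [hmC 1, hmC 2] at h1
    linear_combination h1 / 4
  have hvanish := eq_zero_of_succ_eq_mul (c := fun p => a p / (m p : ℂ))
    (fun p hp => hrec p (hn.trans hp)) (by simp [μ])
  exact ⟨ha1, ha2, hrec, fun j hj => by simpa [hmC j] using hvanish j hj⟩
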